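/- arXiv:2602.11355 — 5 statements merged into one kernel-verified Lean document; each statement's English description precedes it below -/
import Mathlib

section
/- For every fixed integer k > 1, the infinite sequence {BoNa(n,k)}_{n ≥ k+1} is log-concave: BoNa(n-1,k)*BoNa(n+1,k) ≤ BoNa(n,k)^2 for all n ≥ k+2. -/
open Finset

-- hockey stick over range
lemma sum_range_choose' (p m : ℕ) :
    ∑ a ∈ Finset.range (m+1), a.choose p = (m+1).choose (p+1) := by
  rw [← Nat.sum_Icc_choose m p]
  symm
  apply Finset.sum_subset
  · intro a ha; simp only [Finset.mem_Icc] at ha; simp only [Finset.mem_range]; omega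
  · intro a ha hna; simp only [Finset.mem_range] at ha; simp only [Finset.mem_Icc] at hna
    exact Nat.choose_eq_zero_of_lt (by omega)

-- dual Vandermonde
lemma dualVandermonde (p : ℕ) : ∀ m q : ℕ,
    ∑ a ∈ Finset.range (m+1), a.choose p * (m-a).choose q = (m+1).choose (p+q+1) := by
  intro m
  induction m with
  | zero =>
    intro q
    rw [Finset.sum_range_one]
    rcases p with _|p
    · rcases q with _|q
      · simp
      · rw [Nat.choose_zero_right, Nat.choose_eq_zero_of_lt (show (0:ℕ) < q+1 by omega),
          Nat.choose_eq_zero_of_lt (show (1:ℕ) < 0+(q+1)+1 by omega)]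
    · rw [Nat.choose_eq_zero_of_lt (show (0:ℕ) < p+1 by omega), Nat.zero_mul,
        Nat.choose_eq_zero_of_lt (show (1:ℕ) < p+1+q+1 by omega)]
  | succ m ih =>
    intro q
    cases q with
    | zero =>
      simp only [Nat.choose_zero_right, mul_one]
      rw [sum_range_choose']
    | succ q =>
      rw [Finset.sum_range_succ]
      have h1 : (m+1-(m+1)).choose (q+1) = 0 := by simp
      have key : ∀ a ∈ Finset.range (m+1),
          a.choose p * (m+1-a).choose (q+1)
            = a.choose p * (m-a).choose (q+1) + a.choose p * (m-a).choose q := by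
        intro a ha
        simp only [Finset.mem_range] at ha
        have h2 : m+1-a = (m-a)+1 := by omega
        rw [h2, Nat.choose_succ_succ]; ring
      rw [Finset.sum_congr rfl key, Finset.sum_add_distrib, ih (q+1), ih q, h1,
        Nat.mul_zero, Nat.add_zero]
      have e : p + (q+1) + 1 = (p + q + 1) + 1 := by omega
      rw [e, show (m+1+1).choose ((p+q+1)+1)
          = (m+1).choose (p+q+1) + (m+1).choose ((p+q+1)+1) from Nat.choose_succ_succ _ _]
      omega

lemma sum_Icc_two (m : ℕ) (f : ℕ → ℕ) :
    ∑ i ∈ Finset.Icc 2 m, f i = ∑ a ∈ Finset.range (m-1), f (a+2) := by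
  apply Finset.sum_nbij' (fun i => i - 2) (fun a => a + 2)
  · intro i hi; simp only [Finset.mem_Icc] at hi; simp only [Finset.mem_range]; omega
  · intro a ha; simp only [Finset.mem_range] at ha; simp only [Finset.mem_Icc]; omega
  · intro i hi; simp only [Finset.mem_Icc] at hi; omega
  · intro a _; omega
  · intro i hi; simp only [Finset.mem_Icc] at hi
    congr 1; omega

theorem stmt_7
    (B : ℕ → ℕ → ℕ)
    (h11 : B 1 1 = 1)
    (h0 : ∀ n k : ℕ, k = 0 ∨ n < k → B n k = 0)
    (hrec : ∀ n k : ℕ, 2 ≤ n →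
      B n k = B (n-1) k + B (n-1) (k-1) +
        2 * ∑ i ∈ Finset.Icc 2 (n-1), ∑ j ∈ Finset.range k,
          B (i-1) j * B (n-i) (k-1-j))
    (k : ℕ) (hk : 1 < k) :
    ∀ n : ℕ, k + 2 ≤ n → B (n-1) k * B (n+1) k ≤ (B n k)^2 := by
  have hB00 : B 0 0 = 0 := h0 0 0 (Or.inl rfl)
  -- T lemma
  have Tlem : ∀ n kk : ℕ, 3 ≤ n →
      (∀ m j, 1 ≤ m → m ≤ n - 2 → B m j = B j j * (m-1).choose (j-1)) →
      ∑ i ∈ Finset.Icc 2 (n-1), ∑ j ∈ Finset.range kk, B (i-1) j * B (n-i) (kk-1-j)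
        = (∑ j ∈ Finset.range kk, B j j * B (kk-1-j) (kk-1-j)) * (n-2).choose (kk-2) := by
    intro n kk hn form
    rw [Finset.sum_comm, Finset.sum_mul]
    apply Finset.sum_congr rfl
    intro j hj
    simp only [Finset.mem_range] at hj
    have hrw : ∀ i ∈ Finset.Icc 2 (n-1),
        B (i-1) j * B (n-i) (kk-1-j)
          = (B j j * B (kk-1-j) (kk-1-j)) *
            ((i-2).choose (j-1) * (n-i-1).choose (kk-1-j-1)) := by
      intro i hi
      simp only [Finset.mem_Icc] at hi
      rw [form (i-1) j (by omega) (by omega), form (n-i) (kk-1-j) (by omega) (by omega)]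
      have e1 : i - 1 - 1 = i - 2 := by omega
      have e2 : n - i - 1 = n - i - 1 := rfl
      rw [e1]; ring
    rw [Finset.sum_congr rfl hrw, ← Finset.mul_sum]
    by_cases hj0 : j = 0
    · subst hj0; rw [hB00]; ring
    by_cases hjk : kk - 1 - j = 0
    · have : B (kk-1-j) (kk-1-j) = 0 := by rw [hjk]; exact hB00
      rw [this]; ring
    -- now 1 ≤ j ≤ kk - 2
    congr 1
    rw [sum_Icc_two]
    have hm : n - 1 - 1 = (n-3) + 1 := by omega
    rw [hm]
    have hterm : ∀ a ∈ Finset.range ((n-3)+1),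
        (a + 2 - 2).choose (j-1) * (n-(a+2)-1).choose (kk-1-j-1)
          = a.choose (j-1) * ((n-3)-a).choose (kk-1-j-1) := by
      intro a ha
      simp only [Finset.mem_range] at ha
      congr 2 <;> omega
    rw [Finset.sum_congr rfl hterm, dualVandermonde]
    have e5 : n - 3 + 1 = n - 2 := by omega
    have e6 : j - 1 + (kk-1-j-1) + 1 = kk - 2 := by omega
    rw [e5, e6]
  -- main formula
  have form : ∀ n, 1 ≤ n → ∀ j, B n j = B j j * (n-1).choose (j-1) := by
    intro n
    induction n using Nat.strong_induction_on with
    | _ n IH =>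
      intro hn1 j
      by_cases hj0 : j = 0
      · subst hj0; rw [h0 n 0 (Or.inl rfl), hB00]; ring
      by_cases hnj : n < j
      · rw [h0 n j (Or.inr hnj), Nat.choose_eq_zero_of_lt (by omega), Nat.mul_zero]
      by_cases hnej : n = j
      · subst hnej; rw [Nat.choose_self, Nat.mul_one]
      -- now 1 ≤ j < n, n ≥ 2
      have hn2 : 2 ≤ n := by omega
      have hjn : j < n := by omega
      rw [hrec n j hn2]
      by_cases hj1 : j = 1
      · subst hj1
        have hz : ∑ i ∈ Finset.Icc 2 (n-1), ∑ jj ∈ Finset.range 1,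
            B (i-1) jj * B (n-i) (1-1-jj) = 0 := by
          apply Finset.sum_eq_zero; intro i hi
          apply Finset.sum_eq_zero; intro jj hjj
          simp only [Finset.mem_range, Nat.lt_one_iff] at hjj
          subst hjj
          rw [h0 (i-1) 0 (Or.inl rfl)]; ring
        rw [hz, h0 (n-1) 0 (Or.inl rfl)]
        rw [IH (n-1) (by omega) (by omega) 1]
        simp
      -- 2 ≤ j < n, so n ≥ 3
      have hj2 : 2 ≤ j := by omega
      have hn3 : 3 ≤ n := by omega
      have formlt : ∀ m jj, 1 ≤ m → m ≤ n - 2 → B m jj = B jj jj * (m-1).choose (jj-1) := by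
        intro m jj hm1 hm2; exact IH m (by omega) hm1 jj
      rw [Tlem n j hn3 formlt]
      rw [IH (n-1) (by omega) (by omega) j, IH (n-1) (by omega) (by omega) (j-1)]
      -- need: B (j-1) (j-1) + 2 * S = B j j
      have hS : B (j-1) (j-1) + 2 * (∑ jj ∈ Finset.range j, B jj jj * B (j-1-jj) (j-1-jj))
          = B j j := by
        by_cases hj2' : j = 2
        · subst hj2'
          have hz2 : ∑ jj ∈ Finset.range 2, B jj jj * B (2-1-jj) (2-1-jj) = 0 := by
            rw [Finset.sum_range_succ, Finset.sum_range_one]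
            norm_num [hB00]
          have he : (Finset.Icc 2 (2-1) : Finset ℕ) = ∅ := Finset.Icc_eq_empty (by omega)
          rw [hz2, hrec 2 2 (by norm_num), h0 1 2 (Or.inr (by norm_num)), he,
            Finset.sum_empty]
          omega
        · have hj3 : 3 ≤ j := by omega
          have formlt' : ∀ m jj, 1 ≤ m → m ≤ j - 2 → B m jj = B jj jj * (m-1).choose (jj-1) := by
            intro m jj hm1 hm2; exact IH m (by omega) hm1 jj
          rw [hrec j j (by omega), Tlem j j hj3 formlt',
            h0 (j-1) j (Or.inr (by omega)), Nat.choose_self, Nat.mul_one]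
          omega
      -- finish with Pascal
      have pascal : (n-1).choose (j-1) = (n-2).choose (j-2) + (n-2).choose (j-1) := by
        have e1 : n - 1 = (n-2) + 1 := by omega
        have e2 : j - 1 = (j-2) + 1 := by omega
        rw [e1, e2, Nat.choose_succ_succ]
      have e3 : n - 1 - 1 = n - 2 := by omega
      have e4 : j - 1 - 1 = j - 2 := by omega
      rw [e3, e4, pascal, ← hS]
      ring
  -- log-concavity
  intro n hn
  have h1 : B (n-1) k = B k k * (n-2).choose (k-1) := by
    have e : n - 1 - 1 = n - 2 := by omega
    rw [form (n-1) (by omega) k, e]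
  have h2 : B n k = B k k * (n-1).choose (k-1) := form n (by omega) k
  have h3 : B (n+1) k = B k k * n.choose (k-1) := by
    have e : n + 1 - 1 = n := by omega
    rw [form (n+1) (by omega) k, e]
  rw [h1, h2, h3]
  have key : (n-2).choose (k-1) * n.choose (k-1) ≤ ((n-1).choose (k-1))^2 := by
    set r := k - 1 with hr
    have hnr : r + 3 ≤ n := by omega
    -- (n-1).choose r * n = n.choose r * (n - r)
    have A : (n-1).choose r * n = n.choose r * (n - r) := by
      have := Nat.choose_mul_succ_eq (n-1) r
      have e : n - 1 + 1 = n := by omega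
      rw [e] at this; rw [this]
    have Bq : (n-2).choose r * (n-1) = (n-1).choose r * (n-1-r) := by
      have := Nat.choose_mul_succ_eq (n-2) r
      have e : n - 2 + 1 = n - 1 := by omega
      rw [e] at this; rw [this]
    have hpos : 0 < (n-1) * (n-r) := by
      have : 0 < n - 1 := by omega
      have : 0 < n - r := by omega
      positivity
    have hineq : (n-1-r) * n ≤ (n-1) * (n-r) := by
      set s := n - 1 - r with hsdef
      have e1 : n - 1 = s + r := by omega
      have e2 : n - r = s + 1 := by omega
      have e0 : n = s + r + 1 := by omega
      rw [e1, e2, e0]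
      nlinarith []
    have hmain : (n-2).choose r * n.choose r * ((n-1) * (n-r))
        ≤ ((n-1).choose r)^2 * ((n-1) * (n-r)) := by
      calc (n-2).choose r * n.choose r * ((n-1) * (n-r))
          = ((n-2).choose r * (n-1)) * (n.choose r * (n-r)) := by ring
        _ = ((n-1).choose r * (n-1-r)) * ((n-1).choose r * n) := by rw [Bq, ← A]
        _ = ((n-1).choose r)^2 * ((n-1-r) * n) := by ring
        _ ≤ ((n-1).choose r)^2 * ((n-1) * (n-r)) := Nat.mul_le_mul_left _ hineq
    exact Nat.le_of_mul_le_mul_right hmain hpos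
  calc B k k * (n-2).choose (k-1) * (B k k * n.choose (k-1))
      = (B k k)^2 * ((n-2).choose (k-1) * n.choose (k-1)) := by ring
    _ ≤ (B k k)^2 * ((n-1).choose (k-1))^2 := Nat.mul_le_mul_left _ key
    _ = (B k k * (n-1).choose (k-1))^2 := by ring
end

section
/- Let z_0, z_1, ... be a log-concave sequence of nonnegative real numbers with no internal zeros (i.e., there are no indices i < j < k with z_i·z_k ≠ 0 and z_j = 0). Then the binomial transform v_n = Σ_{j=0}^{n} C(n,j)·z_j is a log-concave sequence: v_{n-1}·v_{n+1} ≤ v_n^2 for all n ≥ 1. -/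
theorem my_cross (z : ℕ → ℝ)
    (hnn : ∀ i, 0 ≤ z i)
    (hlc : ∀ i : ℕ, 1 ≤ i → z (i-1) * z (i+1) ≤ (z i)^2)
    (hniz : ∀ i j k : ℕ, i < j → j < k → z i * z k ≠ 0 → z j ≠ 0) :
    ∀ i j : ℕ, i ≤ j → z i * z (j+1) ≤ z (i+1) * z j := by
  intro i j hij
  induction j, hij using Nat.le_induction with
  | base => exact le_of_eq (mul_comm _ _)
  | succ j hij ih =>
    by_cases hz : z (j+1) = 0
    · have h0 : z i * z (j+1+1) = 0 := by
        by_contra h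
        exact hniz i (j+1) (j+2) (by omega) (by omega) h hz
      rw [h0]
      exact mul_nonneg (hnn _) (hnn _)
    · have hzpos : 0 < z (j+1) := lt_of_le_of_ne (hnn _) (Ne.symm hz)
      have hlc' : z j * z (j+2) ≤ (z (j+1))^2 := by
        have := hlc (j+1) (by omega)
        simpa using this
      have h1 : z i * z (j+1+1) * z (j+1) ≤ z (i+1) * z (j+1) * z (j+1) := by
        calc z i * z (j+1+1) * z (j+1) = (z i * z (j+1)) * z (j+2) := by ring
          _ ≤ (z (i+1) * z j) * z (j+2) := mul_le_mul_of_nonneg_right ih (hnn _)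
          _ = z (i+1) * (z j * z (j+2)) := by ring
          _ ≤ z (i+1) * ((z (j+1))^2) := mul_le_mul_of_nonneg_left hlc' (hnn _)
          _ = z (i+1) * z (j+1) * z (j+1) := by ring
      exact le_of_mul_le_mul_right h1 hzpos

theorem my_chooseLC (m t : ℕ) :
    m.choose t * m.choose (t+2) ≤ (m.choose (t+1))^2 := by
  by_cases hm : m ≤ t + 1
  · rw [Nat.choose_eq_zero_of_lt (by omega : m < t+2)]
    simp
  · have e1 := Nat.choose_succ_right_eq m t
    have e2 := Nat.choose_succ_right_eq m (t+1)
    have key : m.choose t * m.choose (t+2) * ((t+2)*(m-t)) =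
        (m.choose (t+1))^2 * ((t+1)*(m-(t+1))) := by
      calc m.choose t * m.choose (t+2) * ((t+2)*(m-t))
          = (m.choose (t+2) * (t+2)) * (m.choose t * (m-t)) := by ring
        _ = (m.choose (t+1) * (m-(t+1))) * (m.choose (t+1) * (t+1)) := by rw [e2, e1]
        _ = (m.choose (t+1))^2 * ((t+1)*(m-(t+1))) := by ring
    have hle : (t+1)*(m-(t+1)) ≤ (t+2)*(m-t) := Nat.mul_le_mul (by omega) (by omega)
    have h2 : m.choose t * m.choose (t+2) * ((t+2)*(m-t)) ≤
        (m.choose (t+1))^2 * ((t+2)*(m-t)) := by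
      rw [key]; exact Nat.mul_le_mul_left _ hle
    exact Nat.le_of_mul_le_mul_right h2 (Nat.mul_pos (by omega) (by omega))

theorem my_chooseCross (m : ℕ) : ∀ i j : ℕ, i ≤ j →
    (m.choose i : ℝ) * (m.choose (j+1)) ≤ (m.choose (i+1)) * (m.choose j) := by
  apply my_cross (fun k => (m.choose k : ℝ))
  · intro k; positivity
  · intro k hk
    obtain ⟨t, rfl⟩ : ∃ t, k = t + 1 := ⟨k - 1, by omega⟩
    simp only [Nat.add_sub_cancel]
    have := my_chooseLC m t
    push_cast [← Nat.cast_le (α := ℝ)] at this ⊢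
    exact_mod_cast this
  · intro i j k hij hjk h
    have hk : m.choose k ≠ 0 := by
      simp only [ne_eq, mul_eq_zero, not_or] at h
      exact_mod_cast fun hc => h.2 (by exact_mod_cast congrArg (Nat.cast (R := ℝ)) hc)
    have : k ≤ m := by
      by_contra hc; exact hk (Nat.choose_eq_zero_of_lt (by omega))
    exact_mod_cast (Nat.choose_pos (by omega : j ≤ m)).ne'
theorem my_D (m : ℕ) : ∀ i j : ℕ, i ≤ j →
    ((m+1).choose i : ℝ) * (m.choose j) ≤ (m.choose i) * ((m+1).choose j) := by
  intro i j hij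
  match i, j with
  | 0, j =>
    simp only [Nat.choose_zero_right, Nat.cast_one, one_mul, mul_one]
    exact_mod_cast Nat.choose_le_choose j (Nat.le_succ m)
  | (i+1), (j+1) =>
    have hij' : i ≤ j := by omega
    have hc := my_chooseCross m i j hij'
    rw [Nat.choose_succ_succ m i, Nat.choose_succ_succ m j]
    push_cast
    nlinarith [hc]

theorem my_vrec (z : ℕ → ℝ) (k : ℕ) :
    ∑ j ∈ Finset.range (k+2), ((k+1).choose j : ℝ) * z j
      = ∑ j ∈ Finset.range (k+2), (k.choose j : ℝ) * z j
        + ∑ j ∈ Finset.range (k+2), (k.choose j : ℝ) * z (j+1) := by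
  rw [Finset.sum_range_succ' (fun j => ((k+1).choose j : ℝ) * z j) (k+1),
      Finset.sum_range_succ' (fun j => ((k).choose j : ℝ) * z j) (k+1),
      Finset.sum_range_succ (fun j => ((k).choose j : ℝ) * z (j+1)) (k+1)]
  simp only [Nat.choose_succ_succ, Nat.choose_zero_right, Nat.cast_one, one_mul,
    Nat.choose_succ_self, Nat.cast_zero, zero_mul, add_zero, Nat.cast_add, add_mul,
    Finset.sum_add_distrib]
  ring
theorem stmt_13 (z : ℕ → ℝ)
    (hnn : ∀ i, 0 ≤ z i)
    (hlc : ∀ i : ℕ, 1 ≤ i → z (i-1) * z (i+1) ≤ (z i)^2)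
    (hniz : ∀ i j k : ℕ, i < j → j < k → z i * z k ≠ 0 → z j ≠ 0)
    (v : ℕ → ℝ)
    (hv : ∀ n : ℕ, v n = ∑ j ∈ Finset.range (n+1), (n.choose j : ℝ) * z j) :
    ∀ n : ℕ, 1 ≤ n → v (n-1) * v (n+1) ≤ (v n)^2 := by
  intro n hn
  obtain ⟨m, rfl⟩ : ∃ m, n = m + 1 := ⟨n - 1, by omega⟩
  simp only [Nat.add_sub_cancel]
  set s := Finset.range (m+2) with hs
  set A0 := ∑ j ∈ s, (m.choose j : ℝ) * z j with hA0def
  set A1 := ∑ j ∈ s, ((m+1).choose j : ℝ) * z j with hA1def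
  set B0 := ∑ j ∈ s, (m.choose j : ℝ) * z (j+1) with hB0def
  set B1 := ∑ j ∈ s, ((m+1).choose j : ℝ) * z (j+1) with hB1def
  have hvm : v m = A0 := by
    rw [hv m, hA0def, hs,
      Finset.sum_range_succ (fun j => ((m.choose j : ℝ)) * z j) (m+1)]
    simp [Nat.choose_succ_self]
  have hvm1 : v (m+1) = A1 := by rw [hv (m+1)]
  have hrec : A1 = A0 + B0 := by
    rw [hA0def, hA1def, hB0def, hs]; exact my_vrec z m
  have hvm2 : v (m+1+1) = A1 + B1 := by
    rw [hv (m+2), my_vrec z (m+1), Finset.sum_range_succ, Finset.sum_range_succ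
      (fun j => ((m+1).choose j : ℝ) * z (j+1)) (m+2)]
    simp [Nat.choose_succ_self, hA1def, hB1def, hs]
  -- key cross inequality A0 * B1 ≤ A1 * B0
  have hcross := my_cross z hnn hlc hniz
  have main : ∀ i j : ℕ, i ≤ j →
      (m.choose i : ℝ) * z i * (((m+1).choose j : ℝ) * z (j+1))
        + (m.choose j : ℝ) * z j * (((m+1).choose i : ℝ) * z (i+1))
      ≤ ((m+1).choose i : ℝ) * z i * ((m.choose j : ℝ) * z (j+1))
        + ((m+1).choose j : ℝ) * z j * ((m.choose i : ℝ) * z (i+1)) := by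
    intro i j hij
    have hD := my_D m i j hij
    have hE := hcross i j hij
    have hDn : (0:ℝ) ≤ (m.choose i : ℝ) * ((m+1).choose j)
        - ((m+1).choose i : ℝ) * (m.choose j) := by linarith
    have hEn : (0:ℝ) ≤ z (i+1) * z j - z i * z (j+1) := by linarith
    nlinarith [mul_nonneg hDn hEn]
  have sym : ∀ i j : ℕ,
      (m.choose i : ℝ) * z i * (((m+1).choose j : ℝ) * z (j+1))
        + (m.choose j : ℝ) * z j * (((m+1).choose i : ℝ) * z (i+1))
      ≤ ((m+1).choose i : ℝ) * z i * ((m.choose j : ℝ) * z (j+1))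
        + ((m+1).choose j : ℝ) * z j * ((m.choose i : ℝ) * z (i+1)) := by
    intro i j
    rcases le_total i j with h | h
    · exact main i j h
    · have := main j i h; linarith
  have key : A0 * B1 ≤ A1 * B0 := by
    rw [hA0def, hA1def, hB0def, hB1def, Finset.sum_mul_sum, Finset.sum_mul_sum]
    have h2 : ∑ i ∈ s, ∑ j ∈ s,
        ((m.choose i : ℝ) * z i * (((m+1).choose j : ℝ) * z (j+1))
          + (m.choose j : ℝ) * z j * (((m+1).choose i : ℝ) * z (i+1)))
        ≤ ∑ i ∈ s, ∑ j ∈ s,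
        (((m+1).choose i : ℝ) * z i * ((m.choose j : ℝ) * z (j+1))
          + ((m+1).choose j : ℝ) * z j * ((m.choose i : ℝ) * z (i+1))) :=
      Finset.sum_le_sum (fun i _ => Finset.sum_le_sum (fun j _ => sym i j))
    have e1 : ∑ i ∈ s, ∑ j ∈ s,
        ((m.choose i : ℝ) * z i * (((m+1).choose j : ℝ) * z (j+1))
          + (m.choose j : ℝ) * z j * (((m+1).choose i : ℝ) * z (i+1)))
        = 2 * ∑ i ∈ s, ∑ j ∈ s,
            (m.choose i : ℝ) * z i * (((m+1).choose j : ℝ) * z (j+1)) := by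
      simp only [Finset.sum_add_distrib]
      rw [Finset.sum_comm (s := s) (t := s)
        (f := fun j i => (m.choose j : ℝ) * z j * (((m+1).choose i : ℝ) * z (i+1)))]
      ring
    have e2 : ∑ i ∈ s, ∑ j ∈ s,
        (((m+1).choose i : ℝ) * z i * ((m.choose j : ℝ) * z (j+1))
          + ((m+1).choose j : ℝ) * z j * ((m.choose i : ℝ) * z (i+1)))
        = 2 * ∑ i ∈ s, ∑ j ∈ s,
            ((m+1).choose i : ℝ) * z i * ((m.choose j : ℝ) * z (j+1)) := by
      simp only [Finset.sum_add_distrib]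
      rw [Finset.sum_comm (s := s) (t := s)
        (f := fun j i => ((m+1).choose j : ℝ) * z j * ((m.choose i : ℝ) * z (i+1)))]
      ring
    linarith [h2, e1.symm.trans_le (le_of_eq e1), e1 ▸ h2]
  rw [hrec] at key
  rw [hvm, hvm1, hvm2, hrec]
  nlinarith [key]
end

section
/- For every positive integer n, the Narayana polynomial N_n(q) = Σ_{j=1}^{n} C(n,j)·C(n,j−1)·q^j has only real roots, all of which are nonpositive, and its nonzero roots are simple. -/
open Polynomial Finset

def aN (n k j : ℕ) : ℕ := k.factorial * (n.choose j * n.choose (k - j))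

noncomputable def SP (n k : ℕ) : Polynomial ℝ :=
  ∑ j ∈ range (k+1), C ((aN n k j : ℕ) : ℝ) * X ^ j

lemma coeff_SP (n k j : ℕ) :
    (SP n k).coeff j = if j ≤ k then ((aN n k j : ℕ) : ℝ) else 0 := by
  rw [SP, finset_sum_coeff]
  simp only [coeff_C_mul, coeff_X_pow, mul_ite, mul_one, mul_zero]
  rw [Finset.sum_ite_eq (range (k+1)) j]
  simp [Nat.lt_succ_iff]

lemma aN_pos {n k j : ℕ} (hk : k ≤ n) (hj : j ≤ k) : 0 < aN n k j := by
  have h1 : j ≤ n := hj.trans hk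
  have h2 : k - j ≤ n := le_trans (Nat.sub_le _ _) hk
  exact Nat.mul_pos (Nat.factorial_pos _) (Nat.mul_pos (Nat.choose_pos h1) (Nat.choose_pos h2))

lemma natDegree_SP {n k : ℕ} (hk : k ≤ n) : (SP n k).natDegree = k := by
  have h1 : (SP n k).natDegree ≤ k := by
    rw [natDegree_le_iff_coeff_eq_zero]
    intro m hm
    rw [coeff_SP, if_neg (by omega)]
  have h2 : k ≤ (SP n k).natDegree := by
    apply le_natDegree_of_ne_zero
    rw [coeff_SP, if_pos le_rfl]
    exact_mod_cast (aN_pos hk le_rfl).ne'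
  omega

lemma SP_ne_zero {n k : ℕ} (hk : k ≤ n) : SP n k ≠ 0 := by
  intro h
  have := coeff_SP n k k
  rw [h, if_pos le_rfl, coeff_zero] at this
  exact_mod_cast (aN_pos hk le_rfl).ne' (by exact_mod_cast this.symm)

lemma prod_neg_sign {ι : Type*} (s : Finset ι) (f : ι → ℝ)
    (h : ∀ j ∈ s, f j < 0) : 0 < (-1 : ℝ) ^ s.card * ∏ j ∈ s, f j := by
  classical
  induction s using Finset.induction_on with
  | empty => simp
  | @insert a s' hx ih =>
    rw [Finset.card_insert_of_notMem hx, Finset.prod_insert hx, pow_succ]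
    have h1 := ih (fun j hj => h j (Finset.mem_insert_of_mem hj))
    have h2 := h a (Finset.mem_insert_self a s')
    nlinarith

lemma neg_one_pow_congr' {a b : ℕ} (h : a % 2 = b % 2) : ((-1 : ℝ)) ^ a = (-1) ^ b := by
  rcases Nat.even_or_odd a with ha | ha
  · have hb : Even b := by rw [Nat.even_iff] at *; omega
    rw [ha.neg_one_pow, hb.neg_one_pow]
  · have hb : Odd b := by rw [Nat.odd_iff] at *; omega
    rw [ha.neg_one_pow, hb.neg_one_pow]

lemma exists_root_between {p : Polynomial ℝ} {a b : ℝ} (hab : a < b)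
    (h : p.eval a * p.eval b < 0) : ∃ c, a < c ∧ c < b ∧ p.eval c = 0 := by
  have hc : ContinuousOn (fun x => p.eval x) (Set.Icc a b) := (p.continuous_aeval).continuousOn
  rcases lt_or_ge (p.eval a) 0 with h1 | h1
  · have h2 : 0 < p.eval b := by nlinarith
    have := intermediate_value_Ioo hab.le hc (f := fun x => p.eval x)
    have h0 : (0:ℝ) ∈ Set.Ioo (p.eval a) (p.eval b) := ⟨h1, h2⟩
    obtain ⟨c, hc1, hc2⟩ := this h0
    exact ⟨c, hc1.1, hc1.2, hc2⟩
  · have h2 : p.eval b < 0 := by nlinarith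
    have h1' : 0 < p.eval a := by rcases h1.lt_or_eq with h | h; exact h; nlinarith
    have := intermediate_value_Ioo' hab.le hc (f := fun x => p.eval x)
    have h0 : (0:ℝ) ∈ Set.Ioo (p.eval b) (p.eval a) := ⟨h2, h1'⟩
    obtain ⟨c, hc1, hc2⟩ := this h0
    exact ⟨c, hc1.1, hc1.2, hc2⟩

lemma exists_left_sign (p : Polynomial ℝ) (hd : 0 < p.natDegree)
    (hl : 0 < p.leadingCoeff) (y : ℝ) :
    ∃ t < y, 0 < (-1 : ℝ) ^ p.natDegree * p.eval t := by
  set q : Polynomial ℝ := C ((-1 : ℝ) ^ p.natDegree) * p.comp (-X) with hq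
  have hcomp : (p.comp (-X)).leadingCoeff = p.leadingCoeff * (-1) ^ p.natDegree := by
    have : (-X : Polynomial ℝ).natDegree ≠ 0 := by
      rw [natDegree_neg, natDegree_X]; omega
    rw [leadingCoeff_comp this]
    simp
  have hql : q.leadingCoeff = p.leadingCoeff := by
    rw [hq, leadingCoeff_mul, leadingCoeff_C, hcomp]
    rw [mul_comm, mul_assoc, ← pow_add, ← two_mul, pow_mul]
    simp
  have hqd : q.natDegree = p.natDegree := by
    rw [hq, natDegree_C_mul (by positivity), natDegree_comp]
    simp
  have hdeg : 0 < q.degree := by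
    rw [← natDegree_pos_iff_degree_pos, hqd]; exact hd
  have := Polynomial.tendsto_atTop_of_leadingCoeff_nonneg q hdeg (by rw [hql]; exact hl.le)
  have hev : ∀ᶠ x in Filter.atTop, 0 < q.eval x := this.eventually_gt_atTop 0
  have hev2 : ∀ᶠ x in Filter.atTop, -y < x := Filter.eventually_gt_atTop (-y)
  obtain ⟨x, hx1, hx2⟩ := (hev.and hev2).exists
  refine ⟨-x, by linarith, ?_⟩
  have : q.eval x = (-1 : ℝ) ^ p.natDegree * p.eval (-x) := by
    rw [hq, eval_mul, eval_C, eval_comp]; simp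
  rw [← this]; exact hx1

lemma keymain {n k m : ℕ} (hm : m + 1 ≤ k) (hk : k < n) :
    aN n (k+1) (m+1) + m * aN n k m
      = ((n - k) + (m+1)) * aN n k (m+1) + n * aN n k m := by
  obtain ⟨c, rfl⟩ : ∃ c, k = m+1+c := ⟨k - (m+1), by omega⟩
  obtain ⟨d, rfl⟩ : ∃ d, n = m+1+c+1+d := ⟨n - (m+1+c+1), by omega⟩
  have F1 : (m+1+c+1+d).choose (m+1) * (m+1) = (m+1+c+1+d).choose m * (c+1+d+1) := by
    have := Nat.choose_succ_right_eq (m+1+c+1+d) m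
    rwa [show m+1+c+1+d - m = c+1+d+1 by omega] at this
  have F2 : (m+1+c+1+d).choose (c+1) * (c+1) = (m+1+c+1+d).choose c * (m+1+d+1) := by
    have := Nat.choose_succ_right_eq (m+1+c+1+d) c
    rwa [show m+1+c+1+d - c = m+1+d+1 by omega] at this
  simp only [aN]
  rw [show m+1+c+1 - (m+1) = c+1 by omega, show m+1+c - (m+1) = c by omega,
    show m+1+c - m = c+1 by omega, show m+1+c+1+d - (m+1+c) = d+1 by omega,
    show (m+1+c+1) = (m+1+c)+1 from rfl, Nat.factorial_succ]
  zify
  zify at F1 F2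
  linear_combination (((m+1+c).factorial : ℤ) * ((m+1+c+1+d).choose (c+1))) * F1
    + (((m+1+c).factorial : ℤ) * ((m+1+c+1+d).choose (m+1))) * F2

lemma keytop {n k : ℕ} (hk : k < n) :
    aN n (k+1) (k+1) + k * aN n k k = n * aN n k k := by
  obtain ⟨d, rfl⟩ : ∃ d, n = k+1+d := ⟨n - (k+1), by omega⟩
  have F1 : (k+1+d).choose (k+1) * (k+1) = (k+1+d).choose k * (d+1) := by
    have := Nat.choose_succ_right_eq (k+1+d) k
    rwa [show k+1+d - k = d+1 by omega] at this
  simp only [aN]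
  rw [show k+1 - (k+1) = 0 by omega, show k - k = 0 by omega, Nat.factorial_succ]
  zify
  zify at F1
  linear_combination ((k.factorial : ℤ) * ((k+1+d).choose 0)) * F1

lemma key0 {n k : ℕ} (hk : k < n) :
    aN n (k+1) 0 = (n - k) * aN n k 0 := by
  obtain ⟨d, rfl⟩ : ∃ d, n = k+1+d := ⟨n - (k+1), by omega⟩
  have F1 : (k+1+d).choose (k+1) * (k+1) = (k+1+d).choose k * (d+1) := by
    have := Nat.choose_succ_right_eq (k+1+d) k
    rwa [show k+1+d - k = d+1 by omega] at this
  simp only [aN]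
  rw [show k+1-0 = k+1 by omega, show k-0 = k by omega,
    show k+1+d - k = d+1 by omega, Nat.factorial_succ]
  zify
  zify at F1
  linear_combination ((k.factorial : ℤ) * ((k+1+d).choose 0)) * F1

lemma coeff_X_mul' (p : Polynomial ℝ) (m : ℕ) :
    (X * p).coeff m = if m = 0 then 0 else p.coeff (m-1) := by
  cases m with
  | zero => simp [mul_coeff_zero]
  | succ m => rw [coeff_X_mul]; simp

lemma coeff_X_sq_mul (p : Polynomial ℝ) (m : ℕ) :
    (X^2 * p).coeff m = if m ≤ 1 then 0 else p.coeff (m-2) := by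
  match m with
  | 0 => simp [mul_coeff_zero]
  | 1 => rw [pow_two, mul_assoc, coeff_X_mul, coeff_X_mul']; simp
  | (d+2) => rw [show d + 2 = d + 2 from rfl, coeff_X_pow_mul]; simp

lemma SP_rec {n k : ℕ} (hk : k < n) :
    SP n (k+1) = (C (((n - k : ℕ) : ℝ)) + C (n : ℝ) * X) * SP n k
      + (X - X ^ 2) * derivative (SP n k) := by
  have hkn : k ≤ n := hk.le
  ext m
  rw [add_mul, sub_mul, coeff_add, coeff_add, coeff_sub, coeff_C_mul, mul_assoc,
    coeff_C_mul, coeff_X_mul', coeff_X_mul', coeff_X_sq_mul, coeff_SP, coeff_SP]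
  cases m with
  | zero =>
    norm_num
    have hc := congrArg (Nat.cast : ℕ → ℝ) (key0 (n := n) (k := k) hk)
    push_cast at hc ⊢
    linarith
  | succ m =>
    norm_num [coeff_derivative, coeff_SP]
    rcases Nat.eq_zero_or_pos m with rfl | hm
    · norm_num
      rcases Nat.eq_zero_or_pos k with rfl | hk1
      · norm_num
        have hc := congrArg (Nat.cast : ℕ → ℝ) (keytop (n := n) (k := 0) hk)
        push_cast at hc ⊢
        linarith
      · rw [if_pos (by omega : 0 < k), if_pos (by omega : 0 < k)]
        have hc := congrArg (Nat.cast : ℕ → ℝ) (keymain (n := n) (k := k) (m := 0) (by omega) hk)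
        push_cast at hc ⊢
        linarith
    · rw [if_neg (by omega : ¬ m = 0), show m+1-2+1 = m by omega, show m+1-2 = m-1 by omega]
      rcases le_or_gt (m+1) k with h1 | h1
      · rw [if_pos (by omega : m < k), if_pos (by omega : m < k), if_pos (by omega : m ≤ k),
          if_pos (by omega : m - 1 < k), if_pos (by omega : m ≤ k)]
        have hc := congrArg (Nat.cast : ℕ → ℝ) (keymain (n := n) (k := k) (m := m) h1 hk)
        have hmc : ((m - 1 : ℕ) : ℝ) = (m : ℝ) - 1 := by
          have : (1:ℕ) ≤ m := hm
          push_cast [this]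
          ring
        rw [hmc]
        push_cast at hc ⊢
        linarith
      rcases le_or_gt m k with h2 | h2
      · have hmk : m = k := by omega
        subst hmk
        rw [if_neg (by omega : ¬ m < m), if_neg (by omega : ¬ m < m), if_pos le_rfl,
          if_pos (by omega : m - 1 < m), if_pos le_rfl]
        have hc := congrArg (Nat.cast : ℕ → ℝ) (keytop (n := n) (k := m) hk)
        have hmc : ((m - 1 : ℕ) : ℝ) = (m : ℝ) - 1 := by
          have : (1:ℕ) ≤ m := hm
          push_cast [this]
          ring
        rw [hmc]
        push_cast at hc ⊢
        linarith
      · rw [if_neg (by omega : ¬ m < k), if_neg (by omega : ¬ m < k), if_neg (by omega : ¬ m ≤ k),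
          if_neg (by omega : ¬ m - 1 < k), if_neg (by omega : ¬ m ≤ k)]
        ring


def Good (n k : ℕ) : Prop :=
  ∃ r : ℕ → ℝ, (∀ i j, i < j → j < k → r i < r j) ∧ (∀ i < k, r i < 0) ∧
    SP n k = C ((aN n k k : ℕ) : ℝ) * ∏ i ∈ range k, (X - C (r i))

lemma good_zero (n : ℕ) : Good n 0 := by
  refine ⟨fun _ => 0, by omega, by omega, ?_⟩
  simp [SP]


lemma neg_one_mul_self (a : ℕ) : ((-1 : ℝ)) ^ a * (-1) ^ a = 1 := by
  rw [← pow_add, ← two_mul, pow_mul]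
  norm_num

lemma good_step {n k : ℕ} (hk : k + 1 ≤ n) (h : Good n k) : Good n (k+1) := by
  classical
  obtain ⟨r, hmono, hneg, hfac⟩ := h
  have hkn : k ≤ n := by omega
  set T : Polynomial ℝ := SP n (k+1) with hT
  -- degree and leading coeff of T
  have hTdeg : T.natDegree = k + 1 := natDegree_SP hk
  have hTlc : T.leadingCoeff = ((aN n (k+1) (k+1) : ℕ) : ℝ) := by
    rw [leadingCoeff, hTdeg, hT, coeff_SP, if_pos le_rfl]
  have hTlcpos : 0 < T.leadingCoeff := by
    rw [hTlc]; exact_mod_cast aN_pos hk le_rfl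
  have hT0 : 0 < T.eval 0 := by
    rw [← coeff_zero_eq_eval_zero, hT, coeff_SP, if_pos (Nat.zero_le _)]
    exact_mod_cast aN_pos hk (Nat.zero_le _)
  -- evaluation of T at roots of S
  have hSval : ∀ i < k, (SP n k).eval (r i) = 0 := by
    intro i hi
    rw [hfac, eval_mul, eval_prod]
    apply mul_eq_zero_of_right
    exact Finset.prod_eq_zero (Finset.mem_range.mpr hi) (by simp)
  have hqval : ∀ i < k, (derivative (SP n k)).eval (r i)
      = ((aN n k k : ℕ) : ℝ) * ∏ j ∈ (range k).erase i, (r i - r j) := by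
    intro i hi
    rw [hfac, derivative_C_mul, eval_mul, eval_C]
    congr 1
    rw [show derivative (∏ j ∈ range k, (X - C (r j)))
        = ∑ j ∈ range k, (∏ l ∈ (range k).erase j, (X - C (r l))) * derivative (X - C (r j))
      from derivative_prod, eval_finset_sum]
    rw [Finset.sum_eq_single i]
    · simp [eval_prod]
    · intro b hb hbi
      have hmem : i ∈ (range k).erase b := by
        rw [Finset.mem_erase]; exact ⟨hbi.symm, Finset.mem_range.mpr hi⟩
      rw [eval_mul, eval_prod, Finset.prod_eq_zero hmem (by simp), zero_mul]
    · intro hcon; exact absurd (Finset.mem_range.mpr hi) hcon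
  -- sign of the erased product
  have hqsign : ∀ i < k, 0 < (-1 : ℝ) ^ (k - i - 1) * ∏ j ∈ (range k).erase i, (r i - r j) := by
    intro i hi
    have hsplit : (range k).erase i = (range i) ∪ (Ico (i+1) k) := by
      ext a
      simp only [Finset.mem_erase, Finset.mem_range, Finset.mem_union, Finset.mem_Ico]
      omega
    have hdisj : Disjoint (range i) (Ico (i+1) k) := by
      rw [Finset.disjoint_left]
      intro a ha hb
      simp only [Finset.mem_range] at ha
      simp only [Finset.mem_Ico] at hb
      omega
    rw [hsplit, Finset.prod_union hdisj]
    have h1 : 0 < ∏ j ∈ range i, (r i - r j) := by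
      apply Finset.prod_pos
      intro j hj
      simp only [Finset.mem_range] at hj
      have := hmono j i hj hi
      linarith
    have h2 : 0 < (-1 : ℝ) ^ (k - i - 1) * ∏ j ∈ Ico (i+1) k, (r i - r j) := by
      have := prod_neg_sign (Ico (i+1) k) (fun j => r i - r j) (fun j hj => by
        simp only [Finset.mem_Ico] at hj
        simpa using sub_neg.mpr (hmono i j hj.1 hj.2))
      rwa [Nat.card_Ico, show k - (i+1) = k - i - 1 by omega] at this
    nlinarith
  -- sign of T at the old roots
  have hTsign : ∀ i < k, 0 < (-1 : ℝ) ^ (k - i) * T.eval (r i) := by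
    intro i hi
    have hEval : T.eval (r i) = (r i - (r i)^2) *
        (((aN n k k : ℕ) : ℝ) * ∏ j ∈ (range k).erase i, (r i - r j)) := by
      rw [hT, SP_rec (by omega : k < n), eval_add, eval_mul, hSval i hi, mul_zero, zero_add,
        eval_mul, eval_sub, eval_pow, eval_X, hqval i hi]
    have hx : r i - (r i)^2 < 0 := by nlinarith [hneg i hi]
    have hApos : (0:ℝ) < ((aN n k k : ℕ) : ℝ) := by exact_mod_cast aN_pos hkn le_rfl
    have he : ((-1 : ℝ)) ^ (k - i) = -((-1) ^ (k - i - 1)) := by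
      have h2 : k - i = (k - i - 1) + 1 := by omega
      conv_lhs => rw [h2]
      rw [pow_succ]
      ring
    rw [he, hEval]
    have hq := hqsign i hi
    have key := mul_pos (mul_pos hq (neg_pos.mpr hx)) hApos
    nlinarith [key]
  -- the left endpoint
  obtain ⟨t, ht, htsign⟩ := exists_left_sign T (by omega) hTlcpos
    (if hk0 : k = 0 then 0 else r 0)
  rw [hTdeg] at htsign
  -- interval endpoints
  set p : ℕ → ℝ := fun i => if i = 0 then t else if i ≤ k then r (i-1) else 0 with hp
  have hp0 : p 0 = t := by simp [hp]
  have hplast : p (k+1) = 0 := by simp [hp]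
  have hpmid : ∀ i, 1 ≤ i → i ≤ k → p i = r (i-1) := by
    intro i h1 h2
    simp only [hp]
    rw [if_neg (by omega), if_pos h2]
  have htneg : ∀ i < k, t < r i := by
    intro i hi
    have h0 : t < r 0 := by
      rw [dif_neg (by omega : ¬ k = 0)] at ht
      exact ht
    rcases Nat.eq_zero_or_pos i with rfl | hi1
    · exact h0
    · exact h0.trans (hmono 0 i hi1 hi)
  have ht0 : t < 0 := by
    rcases Nat.eq_zero_or_pos k with rfl | hk1
    · rwa [dif_pos rfl] at ht
    · exact (htneg 0 hk1).trans (hneg 0 hk1)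
  have hpmono : ∀ i j, i < j → j ≤ k + 1 → p i < p j := by
    intro i j hij hj
    rcases Nat.eq_zero_or_pos i with rfl | hi1
    · rw [hp0]
      rcases Nat.lt_or_ge j (k+1) with h1 | h1
      · rw [hpmid j (by omega) (by omega)]
        exact htneg (j-1) (by omega)
      · have : j = k+1 := by omega
        rw [this, hplast]; exact ht0
    · rcases Nat.lt_or_ge j (k+1) with h1 | h1
      · rw [hpmid i (by omega) (by omega), hpmid j (by omega) (by omega)]
        exact hmono (i-1) (j-1) (by omega) (by omega)
      · have : j = k+1 := by omega
        rw [this, hplast, hpmid i (by omega) (by omega)]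
        exact hneg (i-1) (by omega)
  have hpsign : ∀ i ≤ k + 1, 0 < (-1 : ℝ) ^ (i + k + 1) * T.eval (p i) := by
    intro i hi
    rcases Nat.eq_zero_or_pos i with rfl | hi1
    · rw [hp0]
      rwa [neg_one_pow_congr' (by omega : (0 + k + 1) % 2 = (k+1) % 2)]
    · rcases Nat.lt_or_ge i (k+1) with h1 | h1
      · rw [hpmid i (by omega) (by omega)]
        have := hTsign (i-1) (by omega)
        rwa [neg_one_pow_congr' (by omega : (i + k + 1) % 2 = (k - (i-1)) % 2)]
      · have : i = k+1 := by omega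
        subst this
        rw [hplast, neg_one_pow_congr' (by omega : (k + 1 + k + 1) % 2 = 0 % 2), pow_zero, one_mul]
        exact hT0
  -- roots of T
  have H : ∀ i ≤ k, ∃ c, p i < c ∧ c < p (i+1) ∧ T.eval c = 0 := by
    intro i hi
    apply exists_root_between (hpmono i (i+1) (by omega) (by omega))
    have h1 := hpsign i (by omega)
    have h2 := hpsign (i+1) (by omega)
    have hmul := mul_pos h1 h2
    have heq : ((-1 : ℝ) ^ (i + k + 1) * T.eval (p i)) * ((-1) ^ (i + 1 + k + 1) * T.eval (p (i+1)))
        = -(T.eval (p i) * T.eval (p (i+1))) := by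
      rw [show i + 1 + k + 1 = (i + k + 1) + 1 by omega, pow_succ]
      have h3 := neg_one_mul_self (i + k + 1)
      linear_combination (-(T.eval (p i) * T.eval (p (i+1)))) * h3
    rw [heq] at hmul
    linarith
  set r' : ℕ → ℝ := fun i => if h : i ≤ k then (H i h).choose else 0 with hr'
  have hr'spec : ∀ i ≤ k, p i < r' i ∧ r' i < p (i+1) ∧ T.eval (r' i) = 0 := by
    intro i hi
    simp only [hr', dif_pos hi]
    exact (H i hi).choose_spec
  have hr'mono : ∀ i j, i < j → j < k + 1 → r' i < r' j := by
    intro i j hij hj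
    have h1 := (hr'spec i (by omega)).2.1
    have h2 := (hr'spec j (by omega)).1
    rcases Nat.lt_or_ge (i+1) j with h3 | h3
    · have := hpmono (i+1) j h3 (by omega)
      linarith
    · have : i + 1 = j := by omega
      subst this
      linarith
  have hr'neg : ∀ i < k + 1, r' i < 0 := by
    intro i hi
    have h1 := (hr'spec i (by omega)).2.1
    rcases Nat.lt_or_ge (i+1) (k+1) with h3 | h3
    · have := hpmono (i+1) (k+1) h3 (by omega)
      rw [hplast] at this
      linarith
    · have : i + 1 = k + 1 := by omega
      rw [this, hplast] at h1
      linarith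
  -- factorization
  refine ⟨r', hr'mono, hr'neg, ?_⟩
  set A' : ℝ := ((aN n (k+1) (k+1) : ℕ) : ℝ) with hA'
  have hA'pos : (0:ℝ) < A' := by
    rw [hA']
    exact_mod_cast aN_pos hk le_rfl
  set M : Polynomial ℝ := ∏ i ∈ range (k+1), (X - C (r' i)) with hM
  have hMmonic : M.Monic := monic_prod_of_monic _ _ (fun i _ => monic_X_sub_C (r' i))
  have hMdeg : M.natDegree = k + 1 := by
    rw [hM, natDegree_prod_of_monic _ _ (fun i _ => monic_X_sub_C (r' i))]
    simp [natDegree_X_sub_C]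
  have hdegeq : T.degree = (C A' * M).degree := by
    rw [degree_C_mul (ne_of_gt hA'pos), degree_eq_natDegree (SP_ne_zero hk),
      degree_eq_natDegree hMmonic.ne_zero, hTdeg, hMdeg]
  have hlceq : T.leadingCoeff = (C A' * M).leadingCoeff := by
    rw [leadingCoeff_mul, leadingCoeff_C, hMmonic.leadingCoeff, mul_one, hTlc]
  by_contra hne
  have hD : T - C A' * M ≠ 0 := sub_ne_zero.mpr hne
  have hDdeg : (T - C A' * M).degree < T.degree := degree_sub_lt hdegeq (SP_ne_zero hk) hlceq
  have hDnat : (T - C A' * M).natDegree < k + 1 := by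
    have := natDegree_lt_natDegree hD hDdeg
    omega
  have hroots : ∀ i < k + 1, (T - C A' * M).IsRoot (r' i) := by
    intro i hi
    have h1 := (hr'spec i (by omega)).2.2
    have h2 : (C A' * M).eval (r' i) = 0 := by
      rw [eval_mul, hM, eval_prod]
      apply mul_eq_zero_of_right
      exact Finset.prod_eq_zero (Finset.mem_range.mpr hi) (by simp)
    simp [IsRoot, eval_sub, h1, h2]
  have hcard : k + 1 ≤ Multiset.card (T - C A' * M).roots := by
    have hsub : (range (k+1)).image r' ⊆ (T - C A' * M).roots.toFinset := by
      intro x hx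
      simp only [Finset.mem_image, Finset.mem_range] at hx
      obtain ⟨i, hi, rfl⟩ := hx
      rw [Multiset.mem_toFinset, mem_roots hD]
      exact hroots i hi
    have hinj : Set.InjOn r' ((range (k+1)) : Set ℕ) := by
      intro i hi j hj hij
      simp only [Finset.coe_range, Set.mem_Iio] at hi hj
      by_contra hne2
      rcases Nat.lt_or_ge i j with h | h
      · exact absurd hij (ne_of_lt (hr'mono i j h hj))
      · exact absurd hij.symm (ne_of_lt (hr'mono j i (by omega) hi))
    calc k + 1 = ((range (k+1)).image r').card := by
          rw [Finset.card_image_of_injOn hinj, Finset.card_range]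
      _ ≤ (T - C A' * M).roots.toFinset.card := Finset.card_le_card hsub
      _ ≤ Multiset.card (T - C A' * M).roots := Multiset.toFinset_card_le _
  have := (T - C A' * M).card_roots' 
  omega


lemma good_all {n k : ℕ} (hk : k ≤ n) : Good n k := by
  induction k with
  | zero => exact good_zero n
  | succ k ih => exact good_step hk (ih (by omega))

lemma narayana_eq (n : ℕ) (hn : 1 ≤ n) :
    C (((n-1).factorial : ℝ)) * (∑ j ∈ Finset.Icc 1 n,
      C ((n.choose j * n.choose (j-1) : ℕ) : ℝ) * X ^ j) = X * SP n (n-1) := by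
  ext m
  rw [coeff_C_mul, finset_sum_coeff, coeff_X_mul']
  simp only [coeff_C_mul, coeff_X_pow, mul_ite, mul_one, mul_zero]
  rw [Finset.sum_ite_eq (Finset.Icc 1 n) m]
  cases m with
  | zero => simp
  | succ m =>
    rw [coeff_SP, if_neg (by omega : ¬ m + 1 = 0)]
    simp only [Nat.add_sub_cancel, Finset.mem_Icc]
    by_cases hm : m + 1 ≤ n
    · rw [if_pos ⟨by omega, hm⟩, if_pos (by omega : m ≤ n - 1)]
      simp only [aN]
      rw [show n - 1 - m = n - (m+1) by omega,
        Nat.choose_symm (by omega : m + 1 ≤ n)]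
      push_cast
      ring
    · rw [if_neg (by omega), if_neg (by omega)]
      simp

theorem stmt_14 (n : ℕ) (hn : 1 ≤ n)
    (N : Polynomial ℝ)
    (hN : N = ∑ j ∈ Finset.Icc 1 n,
      Polynomial.C ((n.choose j * n.choose (j-1) : ℕ) : ℝ) * Polynomial.X ^ j) :
    (∀ z : ℂ, Polynomial.aeval z N = 0 → z.im = 0) ∧
    (∀ x : ℝ, N.IsRoot x → x ≤ 0) ∧
    (∀ x : ℝ, x ≠ 0 → N.IsRoot x → Polynomial.rootMultiplicity x N = 1) := by
  classical
  obtain ⟨r, hmono, hneg, hfac⟩ := good_all (n := n) (k := n - 1) (by omega)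
  have hnar := narayana_eq n hn
  rw [← hN, hfac] at hnar
  set m := n - 1 with hm
  set c : ℝ := ((n-1).factorial : ℝ) with hc
  set A : ℝ := ((aN n m m : ℕ) : ℝ) with hA
  have hcpos : (0:ℝ) < c := by rw [hc]; exact_mod_cast Nat.factorial_pos _
  have hApos : (0:ℝ) < A := by rw [hA]; exact_mod_cast aN_pos (by omega) le_rfl
  have key : C c * N = C A * (X * ∏ i ∈ range m, (X - C (r i))) := by
    rw [hnar]; ring
  have hprodne : (∏ i ∈ range m, (X - C (r i))) ≠ 0 :=
    (monic_prod_of_monic _ _ (fun i _ => monic_X_sub_C (r i))).ne_zero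
  have hNe : N ≠ 0 := by
    intro h0
    rw [h0, mul_zero] at key
    exact (mul_ne_zero (fun h => hApos.ne' (by simpa using congrArg (eval 0) h))
      (mul_ne_zero X_ne_zero hprodne)) key.symm
  -- real root classification
  have hclass : ∀ x : ℝ, N.IsRoot x → x = 0 ∨ ∃ i < m, x = r i := by
    intro x hx
    have hev := congrArg (eval x) key
    simp only [eval_mul, eval_C, eval_X, eval_prod, eval_sub] at hev
    rw [hx] at hev
    have : x * ∏ i ∈ range m, (x - r i) = 0 := by
      rcases mul_eq_zero.mp (by linarith [hev] : A * (x * ∏ i ∈ range m, (x - r i)) = 0) with h | h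
      · exact absurd h hApos.ne'
      · exact h
    rcases mul_eq_zero.mp this with h | h
    · exact Or.inl h
    · obtain ⟨i, hi, hzero⟩ := Finset.prod_eq_zero_iff.mp h
      exact Or.inr ⟨i, Finset.mem_range.mp hi, by linarith [hzero]⟩
  refine ⟨?_, ?_, ?_⟩
  · -- complex roots are real
    intro z hz
    have hmap := congrArg (Polynomial.map (algebraMap ℝ ℂ)) key
    simp only [Polynomial.map_mul, Polynomial.map_C, Polynomial.map_X, Polynomial.map_prod,
      Polynomial.map_sub] at hmap
    have hev := congrArg (eval z) hmap
    simp only [eval_mul, eval_C, eval_X, eval_prod, eval_sub] at hev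
    rw [Polynomial.eval_map, ← Polynomial.aeval_def, hz, mul_zero] at hev
    have hAne : (algebraMap ℝ ℂ) A ≠ 0 := by
      simpa using hApos.ne'
    have : z * ∏ i ∈ range m, (z - (algebraMap ℝ ℂ) (r i)) = 0 := by
      rcases mul_eq_zero.mp hev.symm with h | h
      · exact absurd h hAne
      · exact h
    rcases mul_eq_zero.mp this with h | h
    · rw [h]; rfl
    · obtain ⟨i, hi, hzero⟩ := Finset.prod_eq_zero_iff.mp h
      have : z = (algebraMap ℝ ℂ) (r i) := by linear_combination hzero
      rw [this]
      simp
  · -- roots nonpositive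
    intro x hx
    rcases hclass x hx with rfl | ⟨i, hi, rfl⟩
    · exact le_refl 0
    · exact (hneg i hi).le
  · -- simple nonzero roots
    intro x hx0 hroot
    rcases hclass x hroot with rfl | ⟨i, hi, rfl⟩
    · exact absurd rfl hx0
    · have hCcne : (C c : Polynomial ℝ) ≠ 0 := fun h =>
        hcpos.ne' (by simpa using congrArg (eval 0) h)
      have hCAne : (C A : Polynomial ℝ) ≠ 0 := fun h =>
        hApos.ne' (by simpa using congrArg (eval 0) h)
      have h1 : rootMultiplicity (r i) (C c * N)
          = rootMultiplicity (r i) N := by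
        rw [rootMultiplicity_mul (mul_ne_zero hCcne hNe),
          rootMultiplicity_eq_zero (by simp [IsRoot, hcpos.ne'] : ¬ (C c).IsRoot (r i)),
          zero_add]
      have hprodsplit : (∏ j ∈ range m, (X - C (r j)))
          = (X - C (r i)) * ∏ j ∈ (range m).erase i, (X - C (r j)) := by
        exact (Finset.mul_prod_erase (range m) _ (Finset.mem_range.mpr hi)).symm
      have heraseroot : ¬ (∏ j ∈ (range m).erase i, (X - C (r j))).IsRoot (r i) := by
        intro hcon0
        rw [IsRoot.def, eval_prod] at hcon0
        obtain ⟨j, hj, hz⟩ := Finset.prod_eq_zero_iff.mp hcon0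
        rw [Finset.mem_erase, Finset.mem_range] at hj
        simp only [eval_sub, eval_C, eval_X] at hz
        rcases Nat.lt_or_ge j i with h | h
        · have := hmono j i h hi; linarith
        · have := hmono i j (by omega) hj.2; linarith
      have heraseNe : (∏ j ∈ (range m).erase i, (X - C (r j))) ≠ 0 :=
        (monic_prod_of_monic _ _ (fun j _ => monic_X_sub_C (r j))).ne_zero
      have h2 : rootMultiplicity (r i) (C c * N) = 1 := by
        rw [key, hprodsplit,
          rootMultiplicity_mul (by
            apply mul_ne_zero hCAne
            apply mul_ne_zero X_ne_zero
            exact mul_ne_zero (X_sub_C_ne_zero (r i)) heraseNe),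
          rootMultiplicity_mul (by
            apply mul_ne_zero X_ne_zero
            exact mul_ne_zero (X_sub_C_ne_zero (r i)) heraseNe),
          rootMultiplicity_mul (mul_ne_zero (X_sub_C_ne_zero (r i)) heraseNe),
          rootMultiplicity_eq_zero (by simp [IsRoot, hApos.ne'] : ¬ (C A).IsRoot (r i)),
          rootMultiplicity_eq_zero (by simp [IsRoot, hx0] : ¬ (X : Polynomial ℝ).IsRoot (r i)),
          rootMultiplicity_X_sub_C_self,
          rootMultiplicity_eq_zero heraseroot]
      omega
end

section
/- Let k ≤ (n+1)/2. Then BoNa(n,k) = Σ_{j=0}^{k-1} a_j · C(n−1, k+j−1), where a_j = (2^j/(k−1))·C(k−1, j)·C(k+j−1, k−2), where the coefficients a_j do not depend on n. (Equivalently, the explicit formula (1/n)·C(n,k−1)·Σ_j 2^j·C(k−1,j)·C(n−k+1,j+1) can be rewritten in this form.) -/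
open Nat

theorem stmt_16 (n k : ℕ) (hn : 1 ≤ n) (hk : 2 ≤ k) (hk2 : 2 * k ≤ n + 1) :
    (1 / (n:ℚ)) * (n.choose (k-1)) *
        ∑ j ∈ Finset.range k,
          (2:ℚ)^j * ((k-1).choose j) * ((n-k+1).choose (j+1)) =
      ∑ j ∈ Finset.range k,
        ((2:ℚ)^j / (k-1) * ((k-1).choose j) * ((k+j-1).choose (k-2))) *
          ((n-1).choose (k+j-1)) := by
  obtain ⟨a, rfl⟩ : ∃ a, k = a + 2 := ⟨k - 2, by omega⟩
  obtain ⟨m, rfl⟩ : ∃ m, n = m + 2*a + 3 := ⟨n - (2*a + 3), by omega⟩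
  rw [Finset.mul_sum]
  refine Finset.sum_congr rfl fun j hj => ?_
  have hj' : j ≤ a + 1 := by have := Finset.mem_range.mp hj; omega
  have e1 : a + 2 - 1 = a + 1 := rfl
  have e2 : m + 2*a + 3 - (a + 2) + 1 = m + a + 2 := by omega
  have e3 : a + 2 + j - 1 = a + j + 1 := by omega
  have e4 : a + 2 - 2 = a := rfl
  have e5 : m + 2*a + 3 - 1 = m + 2*a + 2 := rfl
  rw [e1, e2, e3, e4, e5]
  have c1 : ((m + 2*a + 3).choose (a + 1) : ℚ)
      = (m + 2*a + 3)! / ((a + 1)! * (m + a + 2)!) := by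
    rw [Nat.cast_choose ℚ (by omega),
      show m + 2*a + 3 - (a + 1) = m + a + 2 from by omega]
  have c2 : ((m + a + 2).choose (j + 1) : ℚ)
      = (m + a + 2)! / ((j + 1)! * (m + a + 1 - j)!) := by
    rw [Nat.cast_choose ℚ (by omega),
      show m + a + 2 - (j + 1) = m + a + 1 - j from by omega]
  have c3 : ((a + j + 1).choose a : ℚ) = (a + j + 1)! / (a ! * (j + 1)!) := by
    rw [Nat.cast_choose ℚ (by omega),
      show a + j + 1 - a = j + 1 from by omega]
  have c4 : ((m + 2*a + 2).choose (a + j + 1) : ℚ)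
      = (m + 2*a + 2)! / ((a + j + 1)! * (m + a + 1 - j)!) := by
    rw [Nat.cast_choose ℚ (by omega),
      show m + 2*a + 2 - (a + j + 1) = m + a + 1 - j from by omega]
  rw [c1, c2, c3, c4]
  have f1 : ((m + 2*a + 3)! : ℚ) = (m + 2*a + 3 : ℕ) * ((m + 2*a + 2)! : ℕ) := by
    exact_mod_cast congrArg (Nat.cast (R := ℚ)) (Nat.factorial_succ (m + 2*a + 2))
  have f2 : ((a + 1)! : ℚ) = ((a : ℚ) + 1) * (a ! : ℕ) := by
    have : ((a + 1)! : ℕ) = (a + 1) * a ! := Nat.factorial_succ a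
    rw [this]; push_cast; ring
  rw [f1, f2]
  have e6 : ((a + 2 : ℕ) : ℚ) - 1 = (a : ℚ) + 1 := by push_cast; ring
  rw [e6]
  have h1 : ((m + 2*a + 3 : ℕ) : ℚ) ≠ 0 := by exact_mod_cast (by omega : (m + 2*a + 3) ≠ 0)
  have h2 : ((a : ℚ) + 1) ≠ 0 := by positivity
  have h3 : ((a ! : ℕ) : ℚ) ≠ 0 := by exact_mod_cast (Nat.factorial_pos a).ne'
  have h4 : (((m + a + 2)! : ℕ) : ℚ) ≠ 0 := by exact_mod_cast (Nat.factorial_pos _).ne'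
  have h5 : (((j + 1)! : ℕ) : ℚ) ≠ 0 := by exact_mod_cast (Nat.factorial_pos _).ne'
  have h6 : (((m + a + 1 - j)! : ℕ) : ℚ) ≠ 0 := by exact_mod_cast (Nat.factorial_pos _).ne'
  have h7 : (((a + j + 1)! : ℕ) : ℚ) ≠ 0 := by exact_mod_cast (Nat.factorial_pos _).ne'
  have h8 : (((m + 2*a + 2)! : ℕ) : ℚ) ≠ 0 := by exact_mod_cast (Nat.factorial_pos _).ne'
  field_simp
end

section
/- The generating function B(z) = Σ_{n≥1} B(n) z^n of the Boolean-Catalan numbers, where B(n) = Σ_{k=1}^n BoNa(n,k), satisfies the functional equation B = z(1 + 2B + 2B^2) as a formal power series, equivalently 2z·B^2 + (2z−1)·B + z = 0. -/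
open Finset

/-- Truncated Cauchy products: if `a` is supported on `[1,A]` and `c` on `[1,C]` with
`A + C = n`, then the triangular double sum equals the product of full sums. -/
lemma bona_conv_aux (a c : ℕ → ℕ) (A C n : ℕ) (hAC : A + C = n)
    (hc0 : c 0 = 0)
    (haA : ∀ j, A < j → a j = 0) (hcC : ∀ m, C < m → c m = 0) :
    ∑ t ∈ range (n+1), ∑ j ∈ range (t+1), a j * c (t - j)
      = (∑ j ∈ range (n+1), a j) * (∑ m ∈ range (n+1), c m) := by
  rw [Finset.sum_mul_sum]
  have h1 : ∀ t ∈ range (n+1),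
      ∑ j ∈ range (t+1), a j * c (t - j) = ∑ j ∈ range (n+1), a j * c (t - j) := by
    intro t ht
    rw [mem_range] at ht
    apply Finset.sum_subset
    · exact Finset.range_subset_range.2 (by omega)
    · intro j hj hj'
      rw [mem_range] at hj hj'
      have : t - j = 0 := by omega
      rw [this, hc0, mul_zero]
  rw [Finset.sum_congr rfl h1, Finset.sum_comm]
  apply Finset.sum_congr rfl
  intro j _
  by_cases haj : a j = 0
  · simp [haj]
  · have hjA : j ≤ A := by by_contra h; exact haj (haA j (by omega))
    rw [← Finset.mul_sum, ← Finset.mul_sum]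
    congr 1
    have key : ∑ t ∈ range (n+1), c (t - j) = ∑ m ∈ range (n+1-j), c m := by
      rw [Finset.range_eq_Ico,
        ← Finset.sum_Ico_consecutive _ (Nat.zero_le j) (by omega : j ≤ n+1)]
      have hz : ∑ t ∈ Ico 0 j, c (t - j) = 0 := by
        apply Finset.sum_eq_zero
        intro t ht
        rw [mem_Ico] at ht
        rw [(by omega : t - j = 0), hc0]
      rw [hz, zero_add, Finset.sum_Ico_eq_sum_range]
      rw [Finset.range_eq_Ico]
      apply Finset.sum_congr rfl
      intro m _
      congr 1
      omega
    rw [key]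
    apply Finset.sum_subset
    · exact Finset.range_subset_range.2 (by omega)
    · intro m hm hm'
      rw [mem_range] at hm hm'
      exact hcC m (by omega)

lemma bona_main_aux (B : ℕ → ℕ → ℕ)
    (h0 : ∀ n k : ℕ, k = 0 ∨ n < k → B n k = 0)
    (hrec : ∀ n k : ℕ, 2 ≤ n →
      B n k = B (n-1) k + B (n-1) (k-1) +
        2 * ∑ i ∈ Finset.Icc 2 (n-1), ∑ j ∈ Finset.range k,
          B (i-1) j * B (n-i) (k-1-j)) (n : ℕ) :
    (∑ k ∈ Icc 1 (n+2), B (n+2) k)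
      = 2 * (∑ k ∈ Icc 1 (n+1), B (n+1) k)
        + 2 * ∑ i ∈ range (n+2),
            (∑ k ∈ Icc 1 i, B i k) * (∑ k ∈ Icc 1 (n+1-i), B (n+1-i) k) := by
  set S : ℕ → ℕ := fun m => ∑ k ∈ Icc 1 m, B m k with hS
  have hrange : ∀ m t : ℕ, m < t → ∑ k ∈ range t, B m k = S m := by
    intro m t hmt
    symm
    apply Finset.sum_subset
    · intro k hk
      rw [mem_Icc] at hk
      rw [mem_range]
      omega
    · intro k hk hk'
      rw [mem_range] at hk
      rw [mem_Icc] at hk'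
      exact h0 m k (by omega)
  -- rewrite using the recursion
  have step1 : S (n+2) = ∑ k ∈ Icc 1 (n+2),
      (B (n+1) k + B (n+1) (k-1) +
        2 * ∑ i ∈ Icc 2 (n+1), ∑ j ∈ range k, B (i-1) j * B (n+2-i) (k-1-j)) := by
    apply Finset.sum_congr rfl
    intro k _
    have := hrec (n+2) k (by omega)
    simpa using this
  show S (n+2) = 2 * S (n+1) + 2 * ∑ i ∈ range (n+2), S i * S (n+1-i)
  rw [step1, Finset.sum_add_distrib, Finset.sum_add_distrib]
  have t1 : ∑ k ∈ Icc 1 (n+2), B (n+1) k = S (n+1) := by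
    symm
    apply Finset.sum_subset
    · intro k hk; rw [mem_Icc] at hk ⊢; omega
    · intro k hk hk'
      rw [mem_Icc] at hk hk'
      exact h0 (n+1) k (by omega)
  have t2 : ∑ k ∈ Icc 1 (n+2), B (n+1) (k-1) = S (n+1) := by
    have : Icc 1 (n+2) = Ico 1 (n+3) := by rw [← Finset.Ico_add_one_right_eq_Icc]; rfl
    rw [this, Finset.sum_Ico_eq_sum_range]
    have : ∀ i ∈ range (n+3-1), B (n+1) (1+i-1) = B (n+1) i := by
      intro i _; congr 1; omega
    rw [Finset.sum_congr rfl this]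
    exact hrange (n+1) (n+3-1) (by omega)
  have t3 : ∑ k ∈ Icc 1 (n+2),
      2 * ∑ i ∈ Icc 2 (n+1), ∑ j ∈ range k, B (i-1) j * B (n+2-i) (k-1-j)
      = 2 * ∑ i ∈ range (n+2), S i * S (n+1-i) := by
    rw [← Finset.mul_sum]
    congr 1
    rw [Finset.sum_comm]
    -- ∑ i ∈ Icc 2 (n+1), ∑ k ∈ Icc 1 (n+2), ...
    have inner : ∀ i ∈ Icc 2 (n+1),
        ∑ k ∈ Icc 1 (n+2), ∑ j ∈ range k, B (i-1) j * B (n+2-i) (k-1-j)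
          = S (i-1) * S (n+2-i) := by
      intro i hi
      rw [mem_Icc] at hi
      have hIco : Icc 1 (n+2) = Ico 1 (n+3) := by rw [← Finset.Ico_add_one_right_eq_Icc]; rfl
      rw [hIco, Finset.sum_Ico_eq_sum_range]
      have hre : ∀ t ∈ range (n+3-1),
          ∑ j ∈ range (1+t), B (i-1) j * B (n+2-i) (1+t-1-j)
            = ∑ j ∈ range (t+1), B (i-1) j * B (n+2-i) (t-j) := by
        intro t _
        apply Finset.sum_congr (by first | rfl | (congr 1; omega))
        intro j _
        congr 2
        omega
      rw [Finset.sum_congr rfl hre]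
      have := bona_conv_aux (B (i-1)) (B (n+2-i)) (i-1) (n+2-i) (n+1)
        (by omega) (h0 (n+2-i) 0 (Or.inl rfl))
        (fun j hj => h0 (i-1) j (Or.inr hj))
        (fun m hm => h0 (n+2-i) m (Or.inr hm))
      rw [show n+3-1 = (n+1)+1 by omega, this,
        hrange (i-1) (n+2) (by omega), hrange (n+2-i) (n+2) (by omega)]
    rw [Finset.sum_congr rfl inner]
    -- now reindex: ∑ i ∈ Icc 2 (n+1), S (i-1) * S (n+2-i) = ∑ i ∈ range (n+2), S i * S (n+1-i)
    have rhs_eq : ∑ i ∈ range (n+2), S i * S (n+1-i)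
        = ∑ i ∈ Icc 1 n, S i * S (n+1-i) := by
      symm
      apply Finset.sum_subset
      · intro k hk; rw [mem_Icc] at hk; rw [mem_range]; omega
      · intro k hk hk'
        rw [mem_range] at hk
        rw [mem_Icc] at hk'
        have hS0 : S 0 = 0 := by simp [hS]
        rcases Nat.eq_zero_or_pos k with h | h
        · rw [h, hS0, zero_mul]
        · have : n+1-k = 0 := by omega
          rw [this, hS0, mul_zero]
    rw [rhs_eq]
    have hIco2 : Icc 2 (n+1) = Ico 2 (n+2) := by rw [← Finset.Ico_add_one_right_eq_Icc]; rfl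
    have hIco1 : Icc 1 n = Ico 1 (n+1) := by rw [← Finset.Ico_add_one_right_eq_Icc]
    rw [hIco2, hIco1, Finset.sum_Ico_eq_sum_range, Finset.sum_Ico_eq_sum_range]
    apply Finset.sum_congr (by first | rfl | (congr 1; omega))
    intro t _
    congr 2
    · omega
    · omega
  rw [t1, t2, t3]
  ring

theorem stmt_17
    (B : ℕ → ℕ → ℕ)
    (h11 : B 1 1 = 1)
    (h0 : ∀ n k : ℕ, k = 0 ∨ n < k → B n k = 0)
    (hrec : ∀ n k : ℕ, 2 ≤ n →
      B n k = B (n-1) k + B (n-1) (k-1) +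
        2 * ∑ i ∈ Finset.Icc 2 (n-1), ∑ j ∈ Finset.range k,
          B (i-1) j * B (n-i) (k-1-j))
    (Bz : PowerSeries ℚ)
    (hBz : Bz = PowerSeries.mk fun n => ((∑ k ∈ Finset.Icc 1 n, B n k : ℕ) : ℚ)) :
    Bz = PowerSeries.X * (1 + 2 * Bz + 2 * Bz^2) ∧
    2 * PowerSeries.X * Bz^2 + (2 * PowerSeries.X - 1) * Bz + PowerSeries.X = 0 := by
  have hcoeff : ∀ m : ℕ, (PowerSeries.coeff m) Bz
      = ((∑ k ∈ Finset.Icc 1 m, B m k : ℕ) : ℚ) := by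
    intro m; rw [hBz]; simp [PowerSeries.coeff_mk]
  have coeff2 : ∀ m : ℕ, (PowerSeries.coeff m) (Bz^2)
      = ∑ i ∈ Finset.range (m+1),
        ((∑ k ∈ Finset.Icc 1 i, B i k : ℕ) : ℚ) *
        ((∑ k ∈ Finset.Icc 1 (m-i), B (m-i) k : ℕ) : ℚ) := by
    intro m
    rw [sq, PowerSeries.coeff_mul, Finset.Nat.sum_antidiagonal_eq_sum_range_succ_mk]
    apply Finset.sum_congr rfl
    intro i _
    rw [hcoeff, hcoeff]
  have main : Bz = PowerSeries.X * (1 + 2 * Bz + 2 * Bz^2) := by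
    ext n
    rcases n with _ | n
    · simp [hBz, PowerSeries.coeff_zero_eq_constantCoeff, map_mul]
    · rw [PowerSeries.coeff_succ_X_mul, two_mul Bz, two_mul (Bz^2), map_add, map_add,
        map_add, map_add, PowerSeries.coeff_one, hcoeff, hcoeff, coeff2]
      rcases n with _ | s
      · simp [h11]
      · have key := bona_main_aux B h0 hrec s
        push_cast [key]
        simp
        ring
  refine ⟨main, ?_⟩
  linear_combination (-1 : PowerSeries ℚ) * main
end
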